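/- Under the assumptions on F, the second-order coefficient of the power expansion in q is P^(2)(z,y) = ρ(y−z)·[1 + ρ(z−1)·(2−ρ)/(1−ρ)] + ρ(z−1)·((1+ρ(z−1))/(1−ρ))·[1 − ρ(2−ρ)/(1−ρ)]. -/

import Mathlib

open scoped BigOperators

noncomputable section

/-- Polynomials in `z` (outer variable) with coefficients polynomials in `y` (inner variable);
this is the ring in which the coefficients `P^(k)(z,y)` live. -/
abbrev Bzy : Type := Polynomial (Polynomial ℂ)

/-- The variable `y` as an element of `Bzy` (the outer variable `Polynomial.X` is `z`). -/
def yB : Bzy := Polynomial.C Polynomial.X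

/-- A complex constant as an element of `Bzy`. -/
def cB (c : ℂ) : Bzy := Polynomial.C (Polynomial.C c)

/-- The power series `u = z + q (y - z)` in the variable `q`, with coefficients in `Bzy`. -/
def useries : PowerSeries Bzy :=
  PowerSeries.C (R := Bzy) Polynomial.X + PowerSeries.X * PowerSeries.C (R := Bzy) (yB - Polynomial.X)

/-- The inclusion of complex constants into `Bzy[[q]]`. -/
def constHom : ℂ →+* PowerSeries Bzy :=
  (PowerSeries.C (R := Bzy)).comp
    ((Polynomial.C : Polynomial ℂ →+* Bzy).comp (Polynomial.C : ℂ →+* Polynomial ℂ))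

/-- Substitution of `u = z + q(y-z)` for the variable in a polynomial in `y`. -/
def substY : Polynomial ℂ →+* PowerSeries Bzy :=
  Polynomial.eval₂RingHom constHom useries

/-- Substitution `z ↦ z`, `y ↦ u = z + q(y-z)` in a polynomial in `z` and `y`. -/
def substZY : Bzy →+* PowerSeries Bzy :=
  Polynomial.eval₂RingHom substY (PowerSeries.C (R := Bzy) Polynomial.X)

/-- The formal functional equation `z·F(z,y) = (1-ρ+ρu)·[(z-1)·F(0,u) + F(z,u)]`, where
`F = Σ_k q^k P^(k)(z,y)`, `F(0,u)` is obtained by setting `z = 0` (i.e. taking the coefficient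
of `z^0`) and substituting `u` for `y`, and `F(z,u)` by substituting `u` for `y`; the `m`-th
coefficient of `F(z,u)` is `Σ_{k ≤ m} [q^(m-k)] (P^(k)(z, z + q(y-z)))`, and similarly
for `F(0,u)`. -/
def FuncEq (ρ : ℝ) (P : ℕ → Bzy) : Prop :=
  PowerSeries.C (R := Bzy) Polynomial.X * PowerSeries.mk (fun k => P k) =
    (constHom (1 - (ρ : ℂ)) + constHom (ρ : ℂ) * useries) *
      (PowerSeries.C (R := Bzy) (Polynomial.X - 1) *
          PowerSeries.mk (fun m => ∑ k ∈ Finset.range (m + 1),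
            PowerSeries.coeff (R := Bzy) (m - k) (substY ((P k).coeff 0))) +
        PowerSeries.mk (fun m => ∑ k ∈ Finset.range (m + 1),
          PowerSeries.coeff (R := Bzy) (m - k) (substZY (P k))))

/-- `P^(0)(z,y)` does not depend on `y`. -/
def IndepY (P : ℕ → Bzy) : Prop := ∀ n : ℕ, ∃ c : ℂ, (P 0).coeff n = Polynomial.C c

/-- Boundary conditions: `P^(0)(0,1) = 1 - ρ` and `P^(k)(0,1) = 0` for all `k ≥ 1`. -/
def Boundary (ρ : ℝ) (P : ℕ → Bzy) : Prop :=
  ((P 0).coeff 0).eval 1 = 1 - (ρ : ℂ) ∧ ∀ k : ℕ, 1 ≤ k → ((P k).coeff 0).eval 1 = 0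

/-- Derivative with respect to the inner variable `y`. -/
def dy (p : Bzy) : Bzy :=
  p.sum fun n a => Polynomial.C (Polynomial.derivative a) * Polynomial.X ^ n

/-- The polynomial `P^(k)(0,y) + (P^(k)(z,y) - P^(k)(0,y))/z`, where the quotient is exact
polynomial division by the monic polynomial `z`. -/
def bracket (P : ℕ → Bzy) (k : ℕ) : Bzy :=
  Polynomial.C ((P k).coeff 0) + (P k - Polynomial.C ((P k).coeff 0)) /ₘ Polynomial.X

/-- `a_j^k(z) = ∂_y^j [P^(k)(0,y) + (P^(k)(z,y) - P^(k)(0,y))/z] |_{y=z}`, a polynomial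
in the single variable `z`. -/
def aCoef (P : ℕ → Bzy) (j k : ℕ) : Polynomial ℂ :=
  Polynomial.eval₂ (RingHom.id (Polynomial ℂ)) Polynomial.X ((dy^[j]) (bracket P k))

/-- Reinterpret a polynomial in the single variable `z` as an element of `Bzy`. -/
def embZ : Polynomial ℂ →+* Bzy := Polynomial.mapRingHom (Polynomial.C : ℂ →+* Polynomial ℂ)

/-- `A_j^k(z) = jρ a_{j-1}^{k-j}(z) + (1+ρ(z-1)) a_j^{k-j}(z)` for `1 ≤ j ≤ k`,
`A_0^0(z) = 1 + ρ(z-1)`, and `A_j^k(z) = 0` otherwise. -/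
def Acoef (ρ : ℝ) (P : ℕ → Bzy) (j k : ℕ) : Polynomial ℂ :=
  if 1 ≤ j ∧ j ≤ k then
    (j : Polynomial ℂ) * Polynomial.C (ρ : ℂ) * aCoef P (j - 1) (k - j) +
      (1 + Polynomial.C (ρ : ℂ) * (Polynomial.X - 1)) * aCoef P j (k - j)
  else if j = 0 ∧ k = 0 then 1 + Polynomial.C (ρ : ℂ) * (Polynomial.X - 1)
  else 0

end

/-!
Comparing coefficients of `q^m` in the functional equation, the terms that involve `P^(m)`
itself are `z P(z,y) - (1 - ρ + ρz)((z - 1) P(0,z) + P(z,z))` (`Bzy.defect`); everything else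
comes from `P^(0), …, P^(m-1)`. This operator is injective on polynomials with `P(0,1) = 0`: if it
vanishes, `z P` is a polynomial in `z` alone, so `P = v(z)`, and then `v(0) = P(0,1) = 0` leaves
`(1 - ρ)(z - 1) v = 0`. Hence `P^(0), P^(1), P^(2)` are determined one after the other by the
boundary values, and it suffices to check that the closed forms solve the three coefficient
equations.
-/

open Polynomial

theorem Polynomial.eq_map_divX_of_X_mul_eq_map {R S : Type*} [Semiring R] [Semiring S]
    (f : R →+* S) {d : S[X]} {w : R[X]} (h : X * d = w.map f) : d = w.divX.map f := by
  ext n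
  simpa [coeff_X_mul, coeff_divX] using congrArg (coeff · (n + 1)) h

namespace Bzy

/-- `p(z,y) ↦ p(0,z)`. -/
noncomputable def evalZero : Bzy →+* Bzy := embZ.comp constantCoeff

/-- `p(z,y) ↦ p(z,z)`. -/
noncomputable def evalDiag : Bzy →+* Bzy := embZ.comp (eval₂RingHom (RingHom.id _) X)

@[simp] lemma cB_zero : cB 0 = 0 := by simp [cB]
@[simp] lemma cB_one : cB 1 = 1 := by simp [cB]
lemma cB_add (a b : ℂ) : cB (a + b) = cB a + cB b := by simp [cB]
lemma cB_sub (a b : ℂ) : cB (a - b) = cB a - cB b := by simp [cB]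
lemma cB_mul (a b : ℂ) : cB (a * b) = cB a * cB b := by simp [cB]

@[simp] lemma embZ_X : embZ X = X := by simp [embZ]
@[simp] lemma embZ_C (c : ℂ) : embZ (C c) = cB c := by simp [embZ, cB]

lemma embZ_injective : Function.Injective embZ := map_injective _ C_injective

@[simp] lemma evalZero_X : evalZero X = 0 := by simp [evalZero]
@[simp] lemma evalZero_yB : evalZero yB = X := by simp [evalZero, yB]
@[simp] lemma evalZero_cB (c : ℂ) : evalZero (cB c) = cB c := by simp [evalZero, cB]
@[simp] lemma evalZero_embZ (q : ℂ[X]) : evalZero (embZ q) = cB (q.coeff 0) := by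
  simp [evalZero, embZ, cB]

@[simp] lemma evalDiag_X : evalDiag X = X := by simp [evalDiag]
@[simp] lemma evalDiag_yB : evalDiag yB = X := by simp [evalDiag, yB]
@[simp] lemma evalDiag_cB (c : ℂ) : evalDiag (cB c) = cB c := by simp [evalDiag, cB]
@[simp] lemma evalDiag_embZ (q : ℂ[X]) : evalDiag (embZ q) = embZ q := by
  simp [evalDiag, embZ, eval₂_map]

noncomputable def evalZeroOne : Bzy →+* ℂ := (evalRingHom 1).comp constantCoeff

lemma evalZeroOne_apply (p : Bzy) : evalZeroOne p = (p.coeff 0).eval 1 := rfl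

@[simp] lemma evalZeroOne_X : evalZeroOne X = 0 := by simp [evalZeroOne]
@[simp] lemma evalZeroOne_yB : evalZeroOne yB = 1 := by simp [evalZeroOne, yB]
@[simp] lemma evalZeroOne_cB (c : ℂ) : evalZeroOne (cB c) = c := by simp [evalZeroOne, cB]

@[simp] lemma substY_C (c : ℂ) : substY (C c) = PowerSeries.C (cB c) := by
  simp [substY, constHom, cB]
@[simp] lemma substY_X : substY X = useries := by simp [substY]
@[simp] lemma substZY_C (a : ℂ[X]) : substZY (C a) = substY a := by simp [substZY]
@[simp] lemma substZY_X : substZY X = PowerSeries.C X := by simp [substZY]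

lemma constantCoeff_comp_substY : PowerSeries.constantCoeff.comp substY = embZ := by
  ext <;> simp [useries]

lemma constantCoeff_comp_substZY : PowerSeries.constantCoeff.comp substZY = evalDiag := by
  ext <;> simp [useries, evalDiag]

lemma substZY_comp_embZ : substZY.comp embZ = PowerSeries.C.comp embZ := by
  ext <;> simp [cB]

lemma constHom_add_constHom_mul_useries (ρ : ℂ) : constHom (1 - ρ) + constHom ρ * useries =
    PowerSeries.C (1 + cB ρ * (X - 1)) + PowerSeries.X * PowerSeries.C (cB ρ * (yB - X)) := by
  simp only [constHom, useries, cB, RingHom.comp_apply, map_sub, map_one, map_add, map_mul]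
  ring

noncomputable def defect (ρ : ℂ) (p : Bzy) : Bzy :=
  X * p - (1 + cB ρ * (X - 1)) * ((X - 1) * evalZero p + evalDiag p)

lemma defect_sub (ρ : ℂ) (p q : Bzy) : defect ρ (p - q) = defect ρ p - defect ρ q := by
  simp only [defect, map_sub]
  ring

lemma eq_zero_of_defect_eq_zero {ρ : ℂ} (hρ : ρ ≠ 1) {d : Bzy} (hd : defect ρ d = 0)
    (hb : evalZeroOne d = 0) : d = 0 := by
  set g : ℂ[X] := 1 + C ρ * (X - 1) with hg
  have hXd : X * d = embZ (g * ((X - 1) * d.coeff 0 + eval₂ (RingHom.id _) X d)) := by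
    rw [defect, sub_eq_zero] at hd
    simp [hd, g, evalZero, evalDiag]
  obtain ⟨v, rfl⟩ : ∃ v, d = embZ v := ⟨_, eq_map_divX_of_X_mul_eq_map _ hXd⟩
  have hv0 : v.coeff 0 = 0 := by simpa [evalZeroOne, embZ] using hb
  have hv : (X - g) * v = 0 := by
    apply embZ_injective
    rw [defect, evalZero_embZ, evalDiag_embZ, hv0, cB_zero] at hd
    simp only [hg, map_mul, map_sub, map_add, map_one, map_zero, embZ_X, embZ_C]
    linear_combination hd
  have hXg : X - g = C (1 - ρ) * (X - 1) := by rw [hg, map_sub, map_one]; ring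
  rw [hXg, mul_assoc, mul_eq_zero, C_eq_zero, sub_eq_zero, mul_eq_zero] at hv
  rcases hv with h | h | h
  · exact absurd h.symm hρ
  · exact absurd h (X_sub_C_ne_zero 1)
  · simp [h]

lemma eq_of_defect_eq {ρ : ℂ} (hρ : ρ ≠ 1) {p q : Bzy} (h : defect ρ p = defect ρ q)
    (hb : evalZeroOne p = evalZeroOne q) : p = q :=
  sub_eq_zero.mp <| eq_zero_of_defect_eq_zero hρ (by rw [defect_sub, h, sub_self])
    (by rw [map_sub, hb, sub_self])

/-- The `q^j`-coefficient of `(z - 1) p(0,u) + p(z,u)`: in `FuncEq`, `P^(k)` contributes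
`contrib (m - k) (P k)` to the `q^m`-coefficient of the bracket. -/
noncomputable def contrib (j : ℕ) (p : Bzy) : Bzy :=
  (X - 1) * PowerSeries.coeff j (substY (p.coeff 0)) + PowerSeries.coeff j (substZY p)

lemma contrib_zero (p : Bzy) : contrib 0 p = (X - 1) * evalZero p + evalDiag p := by
  simp only [contrib, PowerSeries.coeff_zero_eq_constantCoeff_apply]
  rw [← RingHom.comp_apply _ substY, constantCoeff_comp_substY,
    ← RingHom.comp_apply _ substZY, constantCoeff_comp_substZY]
  rfl

lemma defect_eq_sub_contrib (ρ : ℂ) (p : Bzy) :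
    defect ρ p = X * p - (1 + cB ρ * (X - 1)) * contrib 0 p := by
  rw [contrib_zero, defect]

lemma contrib_add (j : ℕ) (p q : Bzy) : contrib j (p + q) = contrib j p + contrib j q := by
  simp only [contrib, coeff_add, map_add]
  ring

lemma contrib_embZ {j : ℕ} (hj : j ≠ 0) (q : ℂ[X]) : contrib j (embZ q) = 0 := by
  rw [contrib, ← RingHom.comp_apply substZY, substZY_comp_embZ]
  simp [PowerSeries.coeff_C, hj, embZ]

lemma contrib_one_cB_mul_yB_sub_X (a : ℂ) :
    contrib 1 (cB a * (yB - X)) = cB a * (yB - X) * X := by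
  simp only [contrib, cB, yB, useries, mul_coeff_zero, coeff_C_zero, coeff_sub, coeff_X_zero,
    sub_zero, map_mul, map_sub, map_add, substY_C, substY_X, substZY_C, substZY_X,
    PowerSeries.coeff_C_mul, PowerSeries.coeff_succ_C, PowerSeries.coeff_succ_X_mul,
    PowerSeries.coeff_zero_eq_constantCoeff, PowerSeries.constantCoeff_C, zero_add,
    add_sub_cancel_left]
  ring

lemma contrib_one_add_cB_mul_of_ne_zero (ρ : ℂ) {j : ℕ} (hj : j ≠ 0) :
    contrib j (1 + cB ρ * (X - 1)) = 0 := by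
  have h : (1 + cB ρ * (X - 1) : Bzy) = embZ (1 + C ρ * (X - 1)) := by simp
  rw [h]
  exact contrib_embZ hj _

lemma contrib_zero_one_add_cB_mul (ρ : ℂ) : contrib 0 (1 + cB ρ * (X - 1)) = X := by
  simp only [contrib_zero, map_add, map_mul, map_sub, map_one, evalZero_X, evalZero_cB,
    evalDiag_X, evalDiag_cB]
  ring

end Bzy

open Bzy

namespace FuncEq

variable {ρ : ℝ} {P : ℕ → Bzy}

lemma series_eq (hF : FuncEq ρ P) :
    PowerSeries.C X * PowerSeries.mk P =
      (PowerSeries.C (1 + cB ρ * (X - 1)) + PowerSeries.X * PowerSeries.C (cB ρ * (yB - X))) *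
        PowerSeries.mk (fun m => ∑ k ∈ Finset.range (m + 1), contrib (m - k) (P k)) := by
  rw [← constHom_add_constHom_mul_useries, hF]
  congr 1
  ext m : 1
  simp only [map_add, PowerSeries.coeff_C_mul, PowerSeries.coeff_mk, contrib, Finset.mul_sum,
    Finset.sum_add_distrib]

lemma coeff_zero (hF : FuncEq ρ P) : X * P 0 = (1 + cB ρ * (X - 1)) * contrib 0 (P 0) := by
  simpa using congrArg PowerSeries.constantCoeff hF.series_eq

lemma coeff_succ (hF : FuncEq ρ P) (m : ℕ) :
    X * P (m + 1) =
      (1 + cB ρ * (X - 1)) * ∑ k ∈ Finset.range (m + 2), contrib (m + 1 - k) (P k) +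
        cB ρ * (yB - X) * ∑ k ∈ Finset.range (m + 1), contrib (m - k) (P k) := by
  have h := congrArg (PowerSeries.coeff (m + 1)) hF.series_eq
  rwa [add_mul, map_add, PowerSeries.coeff_C_mul, PowerSeries.coeff_C_mul, mul_assoc,
    PowerSeries.coeff_succ_X_mul, PowerSeries.coeff_C_mul, PowerSeries.coeff_mk,
    PowerSeries.coeff_mk, PowerSeries.coeff_mk] at h

lemma defect_zero (hF : FuncEq ρ P) : defect ρ (P 0) = 0 := by
  rw [defect_eq_sub_contrib, hF.coeff_zero, sub_self]

lemma defect_succ (hF : FuncEq ρ P) (m : ℕ) :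
    defect ρ (P (m + 1)) =
      (1 + cB ρ * (X - 1)) * ∑ k ∈ Finset.range (m + 1), contrib (m + 1 - k) (P k) +
        cB ρ * (yB - X) * ∑ k ∈ Finset.range (m + 1), contrib (m - k) (P k) := by
  rw [defect_eq_sub_contrib, hF.coeff_succ, Finset.sum_range_succ _ (m + 1), Nat.sub_self]
  ring

lemma apply_zero (hF : FuncEq ρ P) (hρ : (ρ : ℂ) ≠ 1) (hB : Boundary ρ P) :
    P 0 = 1 + cB ρ * (X - 1) := by
  refine eq_of_defect_eq hρ ?_ ?_
  · rw [hF.defect_zero]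
    simp only [defect, map_add, map_sub, map_mul, map_one, evalZero_X, evalZero_cB,
      evalDiag_X, evalDiag_cB]
    ring
  · rw [evalZeroOne_apply, hB.1]
    simp only [map_add, map_sub, map_mul, map_one, evalZeroOne_X, evalZeroOne_cB]
    ring

-- `t` stands for `ρ / (1 - ρ)`; passing it through `t (1 - ρ) = ρ` keeps the checks polynomial.
lemma apply_one (hF : FuncEq ρ P) {t : ℂ} (ht : t * (1 - ρ) = ρ) (hB : Boundary ρ P) :
    P 1 = cB ρ * (yB - X) + cB t * (X - 1) * (1 + cB ρ * (X - 1)) := by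
  have hρ : (ρ : ℂ) ≠ 1 := by rintro h; simp [h] at ht
  have hP0 := hF.apply_zero hρ hB
  have ht' : cB t * (1 - cB ρ) = cB ρ := by rw [← cB_one, ← cB_sub, ← cB_mul, ht]
  refine eq_of_defect_eq hρ ?_ ?_
  · rw [hF.defect_succ 0]
    simp only [Finset.sum_range_one, Nat.sub_zero, hP0, contrib_zero_one_add_cB_mul,
      contrib_one_add_cB_mul_of_ne_zero _ one_ne_zero, mul_zero, zero_add, defect, map_add,
      map_sub, map_mul, map_one, evalZero_X, evalZero_yB, evalZero_cB, evalDiag_X, evalDiag_yB,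
      evalDiag_cB]
    linear_combination -(1 + cB ρ * (X - 1)) * (X - 1) * X * ht'
  · rw [evalZeroOne_apply, hB.2 1 le_rfl]
    simp only [map_add, map_sub, map_mul, map_one, evalZeroOne_X, evalZeroOne_yB, evalZeroOne_cB]
    linear_combination ht

lemma apply_two (hF : FuncEq ρ P) {t : ℂ} (ht : t * (1 - ρ) = ρ) (hB : Boundary ρ P) :
    P 2 = cB ρ * (yB - X) * (1 + (cB t + cB ρ) * (X - 1)) +
      cB t * (1 - cB t - cB ρ) * (X - 1) * (1 + cB ρ * (X - 1)) := by
  have hρ : (ρ : ℂ) ≠ 1 := by rintro h; simp [h] at ht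
  have hP0 := hF.apply_zero hρ hB
  have hP1 := hF.apply_one ht hB
  have ht' : cB t * (1 - cB ρ) = cB ρ := by rw [← cB_one, ← cB_sub, ← cB_mul, ht]
  have hP1_contrib : contrib 1 (P 1) = cB ρ * (yB - X) * X := by
    have hP1' : P 1 = cB ρ * (yB - X) + embZ (C t * (X - 1) * (1 + C (ρ : ℂ) * (X - 1))) := by
      simp [hP1]
    rw [hP1', contrib_add, contrib_one_cB_mul_yB_sub_X, contrib_embZ one_ne_zero, add_zero]
  refine eq_of_defect_eq hρ ?_ ?_
  · rw [hF.defect_succ 1]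
    simp only [Finset.sum_range_succ, Finset.sum_range_zero, Nat.reduceAdd, Nat.reduceSub,
      Nat.sub_zero, Nat.sub_self, hP0, contrib_one_add_cB_mul_of_ne_zero _ one_ne_zero,
      contrib_one_add_cB_mul_of_ne_zero _ two_ne_zero, hP1_contrib]
    simp only [hP1, contrib_zero, defect, map_add, map_sub, map_mul, map_one, evalZero_X,
      evalZero_yB, evalZero_cB, evalDiag_X, evalDiag_yB, evalDiag_cB]
    linear_combination
      X * (X - 1) * ((cB ρ + cB t - 1) * (1 + cB ρ * (X - 1)) - cB ρ * (yB - X)) * ht'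
  · rw [evalZeroOne_apply, hB.2 2 (by norm_num)]
    simp only [map_add, map_sub, map_mul, map_one, evalZeroOne_X, evalZeroOne_yB, evalZeroOne_cB]
    linear_combination (1 - t - ρ) * ht

end FuncEq

theorem stmt12_general (ρ : ℝ) (hρ : ρ ∈ Set.Ioo (0 : ℝ) 1) (P : ℕ → Bzy)
    (hF : FuncEq ρ P) (hB : Boundary ρ P) :
    P 2 = cB (ρ : ℂ) * (yB - Polynomial.X) *
        (1 + cB (ρ : ℂ) * (Polynomial.X - 1) * cB ((2 - (ρ : ℂ)) * (1 - (ρ : ℂ))⁻¹)) +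
      cB (ρ : ℂ) * (Polynomial.X - 1) *
        ((1 + cB (ρ : ℂ) * (Polynomial.X - 1)) * cB ((1 - (ρ : ℂ))⁻¹)) *
        (1 - cB ((ρ : ℂ) * (2 - (ρ : ℂ)) * (1 - (ρ : ℂ))⁻¹)) := by
  have hρ1 : (1 : ℂ) - ρ ≠ 0 := sub_ne_zero.mpr (by exact_mod_cast hρ.2.ne')
  set t : ℂ := ρ * (1 - (ρ : ℂ))⁻¹ with ht
  have e1 : ρ * ((2 - ρ) * (1 - (ρ : ℂ))⁻¹) = t + ρ := by rw [ht]; field_simp; ring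
  have e2 : ρ * (1 - (ρ : ℂ))⁻¹ * (1 - ρ * (2 - ρ) * (1 - (ρ : ℂ))⁻¹) = t * (1 - t - ρ) := by
    rw [ht]; field_simp; ring
  rw [hF.apply_two (t := t) (inv_mul_cancel_right₀ hρ1 _) hB]
  have h1 := congrArg cB e1
  have h2 := congrArg cB e2
  simp only [cB_mul, cB_add, cB_sub, cB_one] at h1 h2 ⊢
  linear_combination -cB ρ * (yB - X) * (X - 1) * h1 - (X - 1) * (1 + cB ρ * (X - 1)) * h2

theorem stmt12 (ρ : ℝ) (hρ : ρ ∈ Set.Ioo (0 : ℝ) 1) (P : ℕ → Bzy)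
    (hF : FuncEq ρ P) (hI : IndepY P) (hB : Boundary ρ P) :
    P 2 = cB (ρ : ℂ) * (yB - Polynomial.X) *
        (1 + cB (ρ : ℂ) * (Polynomial.X - 1) * cB ((2 - (ρ : ℂ)) * (1 - (ρ : ℂ))⁻¹)) +
      cB (ρ : ℂ) * (Polynomial.X - 1) *
        ((1 + cB (ρ : ℂ) * (Polynomial.X - 1)) * cB ((1 - (ρ : ℂ))⁻¹)) *
        (1 - cB ((ρ : ℂ) * (2 - (ρ : ℂ)) * (1 - (ρ : ℂ))⁻¹)) :=
  stmt12_general ρ hρ P hF hB
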